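/- arXiv:1407.6219 — 5 statements merged into one kernel-verified Lean document; each statement's English description precedes it below -/
import Mathlib

section
/- The Knopp function F(x) = Σ_{j=0}^∞ 2^{-αj} φ(2^j x), where φ(x) = dist(x, ℤ) and 0 < α < 1, is Hölder continuous of order α on [0,1]: there exists C > 0 such that for all x, y ∈ [0,1], |F(x) - F(y)| ≤ C|x - y|^α. -/
set_option maxHeartbeats 2000000


open Real MeasureTheory Filter Topology

noncomputable def phi (x : ℝ) : ℝ := |x - round x|

noncomputable def Knopp (α : ℝ) (x : ℝ) : ℝ :=
  ∑' j : ℕ, (2:ℝ) ^ (-(α * (j:ℝ))) * phi ((2:ℝ) ^ j * x)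

lemma phi_nonneg (x : ℝ) : 0 ≤ phi x := abs_nonneg _

lemma phi_le_half (x : ℝ) : phi x ≤ 1/2 := abs_sub_round x

lemma phi_lip (a b : ℝ) : |phi a - phi b| ≤ |a - b| := by
  have key : ∀ u v : ℝ, phi u - phi v ≤ |u - v| := by
    intro u v
    have h1 : phi u ≤ |u - (round v : ℝ)| := round_le u (round v)
    have h2 : |u - (round v : ℝ)| ≤ |u - v| + |v - (round v : ℝ)| := abs_sub_le u v _
    have h3 : phi u ≤ |u - v| + phi v := by unfold phi; exact h1.trans h2
    linarith
  rw [abs_sub_le_iff]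
  refine ⟨key a b, ?_⟩
  have := key b a
  rwa [abs_sub_comm] at this

lemma phi_diff_le_one (a b : ℝ) : |phi a - phi b| ≤ 1 := by
  rw [abs_sub_le_iff]
  constructor <;>
    linarith [phi_le_half a, phi_nonneg b, phi_le_half b, phi_nonneg a]

lemma knopp_summable (α : ℝ) (hα : 0 < α) (x : ℝ) :
    Summable (fun j : ℕ => (2:ℝ) ^ (-(α * (j:ℝ))) * phi ((2:ℝ) ^ j * x)) := by
  have h1 : (2:ℝ) ^ (-α) < 1 :=
    rpow_lt_one_of_one_lt_of_neg one_lt_two (neg_neg_of_pos hα)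
  have h0 : (0:ℝ) ≤ (2:ℝ) ^ (-α) := (rpow_pos_of_pos two_pos _).le
  apply Summable.of_nonneg_of_le
    (fun j => mul_nonneg (rpow_pos_of_pos two_pos _).le (phi_nonneg _))
    (fun j => ?_) ((summable_geometric_of_lt_one h0 h1).mul_right (1/2))
  have hrw : (2:ℝ) ^ (-(α * (j:ℝ))) = ((2:ℝ) ^ (-α)) ^ (j:ℕ) := by
    rw [← Real.rpow_natCast ((2:ℝ) ^ (-α)) j, ← Real.rpow_mul (by norm_num)]
    ring_nf
  rw [hrw]
  exact mul_le_mul_of_nonneg_left (phi_le_half _) (pow_nonneg h0 _)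

theorem knopp_holder (α : ℝ) (hα : 0 < α) (hα1 : α < 1) :
    ∃ C > 0, ∀ x ∈ Set.Icc (0:ℝ) 1, ∀ y ∈ Set.Icc (0:ℝ) 1,
      |Knopp α x - Knopp α y| ≤ C * |x - y| ^ α := by
  have h2pos : (0:ℝ) < 2 := two_pos
  set s : ℝ := (2:ℝ) ^ (-α) with hs_def
  set r : ℝ := (2:ℝ) ^ (1 - α) with hr_def
  have hs_pos : 0 < s := rpow_pos_of_pos two_pos _
  have hs_lt : s < 1 := rpow_lt_one_of_one_lt_of_neg one_lt_two (neg_neg_of_pos hα)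
  have hr_gt : 1 < r :=
    (Real.one_lt_rpow_iff_of_pos two_pos).mpr (Or.inl ⟨one_lt_two, by linarith⟩)
  have hCpos : (0:ℝ) < 1/(r-1) + (2:ℝ)^α / (1-s) := by
    have : (0:ℝ) < (2:ℝ)^α := rpow_pos_of_pos two_pos _
    have h1 : 0 < r - 1 := by linarith
    have h2 : 0 < 1 - s := by linarith
    positivity
  clear_value s r
  refine ⟨1/(r-1) + (2:ℝ)^α / (1-s), hCpos, ?_⟩
  intro x hx y hy
  by_cases hxy : x = y
  · subst hxy
    simp only [sub_self, abs_zero]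
    have : (0:ℝ) ^ α = 0 := Real.zero_rpow hα.ne'
    rw [this, mul_zero]
  set h : ℝ := |x - y| with hh_def
  have hh_pos : 0 < h := abs_pos.mpr (sub_ne_zero.mpr hxy)
  have hh_le1 : h ≤ 1 := by
    rw [hh_def, abs_sub_le_iff]
    obtain ⟨hx0, hx1⟩ := hx; obtain ⟨hy0, hy1⟩ := hy
    constructor <;> linarith
  clear_value h
  -- choose N with 2^N ≤ 1/h < 2^(N+1)
  set N : ℕ := ⌊Real.logb 2 (1/h)⌋₊ with hN_def
  have hinv1 : 1 ≤ 1/h := one_le_one_div hh_pos hh_le1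
  have hlogb_nonneg : 0 ≤ Real.logb 2 (1/h) := Real.logb_nonneg one_lt_two hinv1
  have hN1 : (2:ℝ) ^ (N:ℝ) ≤ 1/h := by
    calc (2:ℝ) ^ (N:ℝ) ≤ (2:ℝ) ^ (Real.logb 2 (1/h)) :=
          Real.rpow_le_rpow_of_exponent_le one_le_two (Nat.floor_le hlogb_nonneg)
      _ = 1/h := Real.rpow_logb two_pos (by norm_num) (by positivity)
  have hN2 : 1/h < (2:ℝ) ^ ((N:ℝ) + 1) := by
    calc 1/h = (2:ℝ) ^ (Real.logb 2 (1/h)) :=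
          (Real.rpow_logb two_pos (by norm_num) (by positivity)).symm
      _ < (2:ℝ) ^ ((N:ℝ) + 1) :=
          Real.rpow_lt_rpow_of_exponent_lt one_lt_two
            (by exact_mod_cast Nat.lt_floor_add_one (Real.logb 2 (1/h)))
  clear_value N
  have h_le : h ≤ (2:ℝ) ^ (-(N:ℝ)) := by
    have hp : (0:ℝ) < (2:ℝ) ^ (N:ℝ) := rpow_pos_of_pos two_pos _
    have := one_div_le_one_div_of_le hp hN1
    rw [one_div_one_div] at this
    rwa [Real.rpow_neg two_pos.le, ← one_div]
  have h_gt : (2:ℝ) ^ (-((N:ℝ)+1)) < h := by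
    have hp : (0:ℝ) < 1/h := by positivity
    have := one_div_lt_one_div_of_lt hp hN2
    rw [one_div_one_div] at this
    rwa [Real.rpow_neg two_pos.le, ← one_div]
  have h2N : (2:ℝ) ^ (-(N:ℝ)) ≤ 2 * h := by
    have e : (2:ℝ) ^ (-(N:ℝ)) = 2 * (2:ℝ) ^ (-((N:ℝ)+1)) := by
      rw [show -(N:ℝ) = 1 + (-((N:ℝ)+1)) by ring, Real.rpow_add two_pos, Real.rpow_one]
    rw [e]
    linarith
  -- the series
  set f : ℕ → ℝ := fun j => (2:ℝ) ^ (-(α * (j:ℝ))) * phi ((2:ℝ) ^ j * x) with hf_def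
  set g : ℕ → ℝ := fun j => (2:ℝ) ^ (-(α * (j:ℝ))) * phi ((2:ℝ) ^ j * y) with hg_def
  have hfs : Summable f := knopp_summable α hα x
  have hgs : Summable g := knopp_summable α hα y
  have hds : Summable (fun j => f j - g j) := hfs.sub hgs
  have hdabs : Summable (fun j => |f j - g j|) := summable_abs_iff.mpr hds
  have hKnopp : Knopp α x - Knopp α y = ∑' j, (f j - g j) := (Summable.tsum_sub hfs hgs).symm
  have habs : |Knopp α x - Knopp α y| ≤ ∑' j, |f j - g j| := by
    rw [hKnopp]
    have hn : Summable (fun j => ‖f j - g j‖) := by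
      simpa only [Real.norm_eq_abs] using hdabs
    have := norm_tsum_le_tsum_norm hn
    simpa only [Real.norm_eq_abs] using this
  have hsplit : ∑' j, |f j - g j|
      = (∑ j ∈ Finset.range N, |f j - g j|) + ∑' k, |f (k + N) - g (k + N)| :=
    (Summable.sum_add_tsum_nat_add N hdabs).symm
  -- termwise bounds
  have hterm : ∀ j : ℕ, |f j - g j| ≤ (2:ℝ) ^ (-(α * (j:ℝ))) * ((2:ℝ)^j * h) := by
    intro j
    have hp : (0:ℝ) < (2:ℝ) ^ (-(α * (j:ℝ))) := rpow_pos_of_pos two_pos _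
    rw [hf_def, hg_def]
    simp only
    rw [← mul_sub, abs_mul, abs_of_pos hp]
    apply mul_le_mul_of_nonneg_left _ hp.le
    calc |phi ((2:ℝ)^j * x) - phi ((2:ℝ)^j * y)| ≤ |(2:ℝ)^j * x - (2:ℝ)^j * y| := phi_lip _ _
      _ = (2:ℝ)^j * h := by rw [← mul_sub, abs_mul, abs_of_pos (by positivity), hh_def]
  have hterm1 : ∀ j : ℕ, |f j - g j| ≤ s ^ j := by
    intro j
    have hp : (0:ℝ) ≤ (2:ℝ) ^ (-(α * (j:ℝ))) := (rpow_pos_of_pos two_pos _).le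
    have hrw : (2:ℝ) ^ (-(α * (j:ℝ))) = s ^ (j:ℕ) := by
      rw [hs_def, ← Real.rpow_natCast ((2:ℝ) ^ (-α)) j, ← Real.rpow_mul (by norm_num)]
      ring_nf
    rw [hf_def, hg_def]
    simp only
    rw [← mul_sub, abs_mul, abs_of_nonneg hp, hrw]
    calc s^j * |phi ((2:ℝ)^j * x) - phi ((2:ℝ)^j * y)| ≤ s^j * 1 :=
          mul_le_mul_of_nonneg_left (phi_diff_le_one _ _) (pow_nonneg hs_pos.le _)
      _ = s^j := mul_one _
  clear_value f g
  -- exponent algebra: 2^{-αj} * 2^j = r^j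
  have hrj : ∀ j : ℕ, (2:ℝ) ^ (-(α * (j:ℝ))) * (2:ℝ)^j = r ^ j := by
    intro j
    rw [← Real.rpow_natCast (2:ℝ) j, ← Real.rpow_add two_pos, hr_def,
        ← Real.rpow_natCast ((2:ℝ) ^ (1-α)) j, ← Real.rpow_mul two_pos.le]
    ring_nf
  -- head bound
  have hrN : (r:ℝ)^N * h ≤ h ^ α := by
    have hp1 : (0:ℝ) < (2:ℝ) ^ ((1-α)*(N:ℝ)) := rpow_pos_of_pos two_pos _
    have e0 : (r:ℝ)^N = (2:ℝ) ^ ((1-α)*(N:ℝ)) := by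
      rw [hr_def, ← Real.rpow_natCast ((2:ℝ)^(1-α)) N, ← Real.rpow_mul two_pos.le]
    have e1 : h ^ (1-α) ≤ (2:ℝ) ^ (-(N:ℝ)*(1-α)) := by
      calc h^(1-α) ≤ ((2:ℝ)^(-(N:ℝ)))^(1-α) :=
            Real.rpow_le_rpow hh_pos.le h_le (by linarith)
        _ = (2:ℝ) ^ (-(N:ℝ)*(1-α)) := (Real.rpow_mul two_pos.le _ _).symm
    have e2 : h = h^α * h^(1-α) := by
      rw [← Real.rpow_add hh_pos]; norm_num
    have hha : (0:ℝ) ≤ h ^ α := (rpow_pos_of_pos hh_pos _).le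
    calc r^N * h = (2:ℝ)^((1-α)*(N:ℝ)) * (h^α * h^(1-α)) := by rw [e0, ← e2]
      _ ≤ (2:ℝ)^((1-α)*(N:ℝ)) * (h^α * (2:ℝ)^(-(N:ℝ)*(1-α))) := by
          apply mul_le_mul_of_nonneg_left _ hp1.le
          exact mul_le_mul_of_nonneg_left e1 hha
      _ = h^α * ((2:ℝ)^((1-α)*(N:ℝ)) * (2:ℝ)^(-(N:ℝ)*(1-α))) := by ring
      _ = h^α := by
          rw [← Real.rpow_add two_pos, show (1-α)*(N:ℝ) + (-(N:ℝ)*(1-α)) = 0 by ring,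
              Real.rpow_zero, mul_one]
  have hhead : (∑ j ∈ Finset.range N, |f j - g j|) ≤ h^α / (r - 1) := by
    have hr1 : (0:ℝ) < r - 1 := by linarith
    calc (∑ j ∈ Finset.range N, |f j - g j|)
        ≤ ∑ j ∈ Finset.range N, r^j * h := by
          apply Finset.sum_le_sum
          intro j _
          have := hterm j
          rwa [show (2:ℝ) ^ (-(α * (j:ℝ))) * ((2:ℝ)^j * h) = ((2:ℝ) ^ (-(α * (j:ℝ))) * (2:ℝ)^j) * h by ring, hrj j] at this
      _ = (∑ j ∈ Finset.range N, r^j) * h := by rw [Finset.sum_mul]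
      _ = ((r^N - 1)/(r - 1)) * h := by rw [geom_sum_eq hr_gt.ne' N]
      _ ≤ (r^N/(r - 1)) * h := by
          apply mul_le_mul_of_nonneg_right _ hh_pos.le
          exact div_le_div_of_nonneg_right (by linarith) hr1.le
      _ = (r^N * h) / (r - 1) := by ring
      _ ≤ h^α / (r - 1) := div_le_div_of_nonneg_right hrN hr1.le
  -- tail bound
  have hsN : s^N ≤ (2:ℝ)^α * h^α := by
    have e : (s:ℝ)^N = ((2:ℝ)^(-(N:ℝ)))^α := by
      rw [hs_def, ← Real.rpow_natCast ((2:ℝ)^(-α)) N, ← Real.rpow_mul two_pos.le,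
          ← Real.rpow_mul two_pos.le]
      ring_nf
    rw [e, ← Real.mul_rpow two_pos.le hh_pos.le]
    exact Real.rpow_le_rpow (rpow_pos_of_pos two_pos _).le h2N hα.le
  have htail : (∑' k, |f (k + N) - g (k + N)|) ≤ (2:ℝ)^α * h^α / (1 - s) := by
    have h1s : (0:ℝ) < 1 - s := by linarith
    have hsum2 : Summable (fun k : ℕ => s^N * s^k) :=
      (summable_geometric_of_lt_one hs_pos.le hs_lt).mul_left _
    have hsum1 : Summable (fun k : ℕ => |f (k + N) - g (k + N)|) :=
      (summable_nat_add_iff N).mpr hdabs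
    have e1 : (∑' k, |f (k + N) - g (k + N)|) ≤ ∑' k : ℕ, s^N * s^k := by
      refine Summable.tsum_le_tsum (fun k => ?_) hsum1 hsum2
      have := hterm1 (k + N)
      rwa [pow_add, mul_comm (s^k) (s^N)] at this
    have e2 : (∑' k : ℕ, s^N * s^k) = s^N * (1 - s)⁻¹ := by
      rw [tsum_mul_left, tsum_geometric_of_lt_one hs_pos.le hs_lt]
    have e3 : s^N * (1 - s)⁻¹ ≤ ((2:ℝ)^α * h^α) * (1 - s)⁻¹ :=
      mul_le_mul_of_nonneg_right hsN (by positivity)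
    have e4 : ((2:ℝ)^α * h^α) * (1 - s)⁻¹ = (2:ℝ)^α * h^α / (1 - s) := by ring
    linarith
  calc |Knopp α x - Knopp α y| ≤ ∑' j, |f j - g j| := habs
    _ = (∑ j ∈ Finset.range N, |f j - g j|) + ∑' k, |f (k + N) - g (k + N)| := hsplit
    _ ≤ h^α / (r - 1) + (2:ℝ)^α * h^α / (1 - s) := add_le_add hhead htail
    _ = (1/(r-1) + (2:ℝ)^α / (1-s)) * h ^ α := by ring
end

section
/- For every x in [0,1], the Knopp function F satisfies F(x) ≤ F(1/3), i.e., the maximum of F on [0,1] is attained at x = 1/3 (and by symmetry also at x = 2/3). -/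
open Real MeasureTheory Filter Topology

lemma phi_double {y : ℝ} (h : 1/3 ≤ phi y) : phi (2*y) = 1 - 2 * phi y := by
  have h2 : |y - round y| ≤ 1/2 := abs_sub_round y
  have h2' : -(1/2) ≤ y - round y := neg_le_of_abs_le h2
  have h2'' : y - round y ≤ 1/2 := le_of_abs_le h2
  rcases le_or_gt 0 (y - round y) with hs | hs
  · have hy : phi y = y - round y := abs_of_nonneg hs
    rw [hy] at h
    have hr : round (2*y) = 2 * round y + 1 := by
      rw [round_eq, Int.floor_eq_iff]
      constructor <;> push_cast <;> linarith
    unfold phi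
    rw [hr, abs_of_nonneg hs]
    push_cast
    rw [abs_of_nonpos (by linarith)]
    ring
  · have hy : phi y = -(y - round y) := abs_of_neg hs
    rw [hy] at h
    have hr : round (2*y) = 2 * round y - 1 := by
      rw [round_eq, Int.floor_eq_iff]
      constructor <;> push_cast <;> linarith
    unfold phi
    rw [hr, abs_of_neg hs]
    push_cast
    rw [abs_of_nonneg (by linarith)]
    ring

lemma phi_third_pow (j : ℕ) : phi ((2:ℝ)^j * (1/3)) = 1/3 := by
  induction j with
  | zero =>
      have : round ((1:ℝ)/3) = 0 := by
        rw [round_eq]; norm_num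
      unfold phi
      rw [pow_zero, one_mul, this]
      norm_num
  | succ n ih =>
      have : (2:ℝ)^(n+1) * (1/3) = 2 * ((2:ℝ)^n * (1/3)) := by ring
      rw [this, phi_double (by rw [ih]), ih]
      norm_num

theorem knopp_max_at_third (α : ℝ) (hα : 0 < α) (hα1 : α < 1) :
    ∀ x ∈ Set.Icc (0:ℝ) 1, Knopp α x ≤ Knopp α (1/3) := by
  intro x _
  set r : ℝ := (2:ℝ) ^ (-α) with hr_def
  have hr0 : 0 < r := Real.rpow_pos_of_pos (by norm_num) _
  have hr1 : r < 1 := by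
    have := Real.rpow_lt_rpow_of_exponent_lt (x := (2:ℝ)) (by norm_num)
      (show -α < 0 by linarith)
    simpa using this
  have hr2 : 1/2 < r := by
    have := Real.rpow_lt_rpow_of_exponent_lt (x := (2:ℝ)) (by norm_num)
      (show (-1:ℝ) < -α by linarith)
    simpa [Real.rpow_neg_one] using this
  have hterm : ∀ j : ℕ, (2:ℝ) ^ (-(α * (j:ℝ))) = r ^ j := by
    intro j
    rw [← Real.rpow_natCast r j, hr_def, ← Real.rpow_mul (by norm_num)]
    ring_nf
  have hgeo : Summable (fun j : ℕ => r ^ j) :=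
    summable_geometric_of_lt_one hr0.le hr1
  -- definitions
  set s : ℕ → ℝ := fun j => phi ((2:ℝ)^j * x) - 1/3 with hs_def
  set c : ℕ → ℝ := fun j => r^j * max (s j) 0 with hc_def
  set d : ℕ → ℝ := fun j => match j with | 0 => 0 | (n+1) => c n with hd_def
  have hc_nonneg : ∀ j, 0 ≤ c j := fun j =>
    mul_nonneg (pow_nonneg hr0.le j) (le_max_right _ _)
  have hc_le : ∀ j, c j ≤ (1/6) * r^j := by
    intro j
    have : max (s j) 0 ≤ 1/6 := by
      have h1 : s j ≤ 1/6 := by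
        have := phi_le_half ((2:ℝ)^j * x); simp only [hs_def]; linarith
      exact max_le h1 (by norm_num)
    calc c j ≤ r^j * (1/6) := by
            exact mul_le_mul_of_nonneg_left this (pow_nonneg hr0.le j)
      _ = (1/6) * r^j := by ring
  have hsum_c : Summable c :=
    Summable.of_nonneg_of_le hc_nonneg hc_le (hgeo.mul_left _)
  have hsum_d : Summable d := by
    have h1 : Summable (fun n => d (n+1)) := hsum_c
    exact (summable_nat_add_iff 1).mp h1
  have hsum_phi : Summable (fun j : ℕ => r^j * phi ((2:ℝ)^j * x)) := by
    apply Summable.of_nonneg_of_le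
      (fun j => mul_nonneg (pow_nonneg hr0.le j) (phi_nonneg _))
      (fun j => ?_) (hgeo.mul_left (1/2))
    calc r^j * phi ((2:ℝ)^j * x) ≤ r^j * (1/2) :=
          mul_le_mul_of_nonneg_left (phi_le_half _) (pow_nonneg hr0.le j)
      _ = (1/2) * r^j := by ring
  -- pointwise inequality
  have hpt : ∀ j, r^j * phi ((2:ℝ)^j * x) + 2*r * d j ≤ r^j * (1/3) + c j := by
    intro j
    match j with
    | 0 =>
        have h1 : s 0 ≤ max (s 0) 0 := le_max_left _ _
        simp only [hd_def, hc_def, pow_zero, one_mul, mul_zero, add_zero, hs_def] at *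
        linarith
    | (n+1) =>
        rcases le_or_gt (s n) 0 with hn | hn
        · have hc0 : c n = 0 := by
            simp only [hc_def, max_eq_right hn, mul_zero]
          have h1 : s (n+1) ≤ max (s (n+1)) 0 := le_max_left _ _
          have h2 : r^(n+1) * s (n+1) ≤ c (n+1) := by
            simp only [hc_def]
            exact mul_le_mul_of_nonneg_left h1 (pow_nonneg hr0.le _)
          have : d (n+1) = c n := rfl
          rw [this, hc0]
          simp only [hs_def] at h2
          linarith
        · have hphi : 1/3 ≤ phi ((2:ℝ)^n * x) := by
            simp only [hs_def] at hn; linarith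
          have hdd : phi ((2:ℝ)^(n+1) * x) = 1 - 2 * phi ((2:ℝ)^n * x) := by
            have e : (2:ℝ)^(n+1) * x = 2 * ((2:ℝ)^n * x) := by ring
            rw [e, phi_double hphi]
          have hdn : d (n+1) = c n := rfl
          have hcn : c n = r^n * (phi ((2:ℝ)^n * x) - 1/3) := by
            simp only [hc_def, hs_def]
            rw [max_eq_left (by simp only [hs_def] at hn; linarith)]
          have key : r^(n+1) * phi ((2:ℝ)^(n+1) * x) + 2*r * c n = r^(n+1) * (1/3) := by
            rw [hdd, hcn]
            ring
          rw [hdn]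
          have := hc_nonneg (n+1)
          linarith
  -- sum it up
  have hLsum : Summable (fun j => r^j * phi ((2:ℝ)^j * x) + 2*r * d j) :=
    hsum_phi.add (hsum_d.mul_left (2*r))
  have hRsum : Summable (fun j : ℕ => r^j * (1/3) + c j) :=
    (hgeo.mul_right (1/3)).add hsum_c
  have hineq := Summable.tsum_le_tsum hpt hLsum hRsum
  rw [Summable.tsum_add hsum_phi (hsum_d.mul_left (2*r)),
      Summable.tsum_add (hgeo.mul_right (1/3)) hsum_c, tsum_mul_left] at hineq
  have hdc : ∑' j, d j = ∑' j, c j := by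
    rw [Summable.tsum_eq_zero_add hsum_d]
    simp only [hd_def]
    rw [zero_add]
  rw [hdc] at hineq
  have hcnn : 0 ≤ ∑' j, c j := tsum_nonneg hc_nonneg
  have hmain : ∑' j, r^j * phi ((2:ℝ)^j * x) ≤ ∑' (j : ℕ), r^j * (1/3) := by
    nlinarith [hineq, hcnn, hr2]
  -- rewrite Knopp
  have hK1 : Knopp α x = ∑' j : ℕ, r^j * phi ((2:ℝ)^j * x) := by
    unfold Knopp
    exact tsum_congr fun j => by rw [hterm j]
  have hK2 : Knopp α (1/3) = ∑' j : ℕ, r^j * (1/3) := by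
    unfold Knopp
    exact tsum_congr fun j => by rw [hterm j, phi_third_pow j]
  rw [hK1, hK2]
  exact hmain
end

section
/- Let F_n(x) = Σ_{j=0}^n 2^{-αj} φ(2^j x). Then F_n is affine on each dyadic interval [k/2^{n+1}, (k+1)/2^{n+1}], and its slope on (k/2^{n+1}, (k+1)/2^{n+1}) equals C_n = Σ_{j=0}^n (-1)^{i_{j+1}} 2^{(1-α)j}, where i_1,...,i_{n+1} are the binary digits of k/2^{n+1} (i.e., k/2^{n+1} = Σ_{j=1}^{n+1} i_j 2^{-j}). -/
open Real MeasureTheory Filter Topology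

noncomputable def KnoppN (α : ℝ) (n : ℕ) (x : ℝ) : ℝ :=
  ∑ j ∈ Finset.range (n+1), (2:ℝ) ^ (-(α * (j:ℝ))) * phi ((2:ℝ) ^ j * x)

noncomputable def digit (x : ℝ) (j : ℕ) : ℕ := (⌊(2:ℝ) ^ j * x⌋).toNat % 2

noncomputable def knoppSlope (α x : ℝ) (n : ℕ) : ℝ :=
  ∑ j ∈ Finset.range n, (-1:ℝ) ^ (digit x (j+1)) * (2:ℝ) ^ ((1-α) * (j:ℝ))

/-! On each half-integer interval `[q/2, (q+1)/2]` the function `phi` is affine with slope `(-1)^q`.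
If `x` lies in the dyadic interval `[k/2^(n+1), (k+1)/2^(n+1)]` and `j ≤ n`, then `2^j x` lies in
such an interval with `q = ⌊k / 2^(n-j)⌋`, whose parity is the binary digit `i_{j+1}` of
`k/2^(n+1)`. Hence the `j`-th summand of `KnoppN` is affine there with slope
`(-1)^{i_{j+1}} 2^{-αj} 2^j`. -/

open Set

theorem phi_eq_abs_sub_of_abs_sub_le_half {t : ℝ} {p : ℤ} (h : |t - p| ≤ 1 / 2) :
    phi t = |t - p| := by
  refine le_antisymm (round_le t p) ?_
  rcases eq_or_ne (round t) p with hp | hp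
  · simp [phi, hp]
  -- another integer is at distance `≥ 1` from `p`, hence at distance `≥ 1/2` from `t`
  · have hone : (1 : ℝ) ≤ |(round t : ℝ) - p| := by
      exact_mod_cast Int.one_le_abs (sub_ne_zero.mpr hp)
    have := abs_sub_le (round t : ℝ) t p
    rw [abs_sub_comm (round t : ℝ) t] at this
    unfold phi
    linarith

theorem phi_eq_of_mem_Icc_half {u : ℝ} {q : ℕ} (hu : u ∈ Icc ((q : ℝ) / 2) ((q + 1) / 2)) :
    phi u = (-1) ^ q * (u - ((q + 1) / 2 : ℕ)) := by
  obtain ⟨hu₁, hu₂⟩ := hu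
  obtain ⟨r, rfl | rfl⟩ := Nat.even_or_odd' q
  · have hdist : |u - ((r : ℤ) : ℝ)| ≤ 1 / 2 := by
      push_cast at hu₁ hu₂ ⊢
      exact abs_le.mpr ⟨by linarith, by linarith⟩
    rw [phi_eq_abs_sub_of_abs_sub_le_half hdist, abs_of_nonneg (by push_cast at hu₁ ⊢; linarith),
      (even_two_mul r).neg_one_pow, show (2 * r + 1) / 2 = r by omega]
    simp
  · have hdist : |u - ((r + 1 : ℕ) : ℤ)| ≤ 1 / 2 := by
      push_cast at hu₁ hu₂ ⊢
      exact abs_le.mpr ⟨by linarith, by linarith⟩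
    rw [phi_eq_abs_sub_of_abs_sub_le_half hdist, abs_of_nonpos (by push_cast at hu₂ ⊢; linarith),
      (odd_two_mul_add_one r).neg_one_pow, show (2 * r + 1 + 1) / 2 = r + 1 by omega]
    simp

theorem phi_sub_phi_of_mem_Icc_half {u v : ℝ} {q : ℕ}
    (hu : u ∈ Icc ((q : ℝ) / 2) ((q + 1) / 2)) (hv : v ∈ Icc ((q : ℝ) / 2) ((q + 1) / 2)) :
    phi u - phi v = (-1) ^ q * (u - v) := by
  rw [phi_eq_of_mem_Icc_half hu, phi_eq_of_mem_Icc_half hv]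
  ring

theorem Icc_div_mul_subset_Icc_natDiv {k b : ℕ} {c : ℝ} (hb : 0 < b) (hc : 0 < c) :
    Icc ((k : ℝ) / (b * c)) ((k + 1) / (b * c)) ⊆
      Icc (((k / b : ℕ) : ℝ) / c) (((k / b : ℕ) + 1) / c) := by
  have hb' : (0 : ℝ) < b := by exact_mod_cast hb
  have hlow : ((k / b : ℕ) : ℝ) ≤ k / b := Nat.cast_div_le
  have hup : ((k : ℝ) + 1) / b ≤ (k / b : ℕ) + 1 := by
    rw [div_le_iff₀ hb']
    have h := Nat.lt_mul_div_succ k hb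
    rw [mul_comm] at h
    exact_mod_cast h
  rw [← div_div, ← div_div]
  exact Icc_subset_Icc (by gcongr) (by gcongr)

theorem two_pow_mul_mem_Icc_half {x : ℝ} {n k j : ℕ} (hj : j ≤ n)
    (hx : x ∈ Icc ((k : ℝ) / 2 ^ (n + 1)) ((k + 1) / 2 ^ (n + 1))) :
    2 ^ j * x ∈ Icc (((k / 2 ^ (n - j) : ℕ) : ℝ) / 2) (((k / 2 ^ (n - j) : ℕ) + 1) / 2) := by
  have hsplit : (2 : ℝ) ^ (n + 1) = 2 ^ j * (((2 ^ (n - j) : ℕ) : ℝ) * 2) := by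
    push_cast
    rw [← mul_assoc, ← pow_add, ← pow_succ, Nat.add_sub_cancel' hj]
  refine Icc_div_mul_subset_Icc_natDiv (by positivity) two_pos ?_
  rw [hsplit] at hx
  obtain ⟨hx₁, hx₂⟩ := hx
  constructor
  · rw [div_le_iff₀ (by positivity)] at hx₁ ⊢
    linarith
  · rw [le_div_iff₀ (by positivity)] at hx₂ ⊢
    linarith

theorem digit_natCast_div_two_pow {n k j : ℕ} (hj : j ≤ n) :
    digit ((k : ℝ) / 2 ^ n) j = k / 2 ^ (n - j) % 2 := by
  have hscale : (2 : ℝ) ^ j * (k / 2 ^ n) = k / ((2 ^ (n - j) : ℕ) : ℝ) := by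
    obtain ⟨m, rfl⟩ := Nat.exists_eq_add_of_le hj
    rw [Nat.add_sub_cancel_left, pow_add]
    push_cast
    field_simp
  rw [digit, hscale, Int.floor_toNat, Nat.floor_div_eq_div]

theorem phi_two_pow_mul_sub {x y : ℝ} {n k j : ℕ} (hj : j ≤ n)
    (hx : x ∈ Icc ((k : ℝ) / 2 ^ (n + 1)) ((k + 1) / 2 ^ (n + 1)))
    (hy : y ∈ Icc ((k : ℝ) / 2 ^ (n + 1)) ((k + 1) / 2 ^ (n + 1))) :
    phi (2 ^ j * x) - phi (2 ^ j * y) =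
      (-1) ^ digit ((k : ℝ) / 2 ^ (n + 1)) (j + 1) * (2 ^ j * (x - y)) := by
  rw [phi_sub_phi_of_mem_Icc_half (two_pow_mul_mem_Icc_half hj hx)
      (two_pow_mul_mem_Icc_half hj hy), digit_natCast_div_two_pow (by omega),
    Nat.add_sub_add_right, ← neg_one_pow_eq_pow_mod_two, ← mul_sub]

theorem knoppN_affine_slope_general (α : ℝ) (n k : ℕ) :
    ∀ x ∈ Set.Icc ((k:ℝ)/2^(n+1)) (((k:ℝ)+1)/2^(n+1)),
    ∀ y ∈ Set.Icc ((k:ℝ)/2^(n+1)) (((k:ℝ)+1)/2^(n+1)),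
      KnoppN α n x - KnoppN α n y = knoppSlope α ((k:ℝ)/2^(n+1)) (n+1) * (x - y) := by
  intro x hx y hy
  rw [KnoppN, KnoppN, knoppSlope, ← Finset.sum_sub_distrib, Finset.sum_mul]
  refine Finset.sum_congr rfl fun j hj => ?_
  have hweight : (2 : ℝ) ^ (-(α * j)) * 2 ^ j = 2 ^ ((1 - α) * j) := by
    rw [← Real.rpow_natCast, ← Real.rpow_add two_pos]
    ring_nf
  rw [← mul_sub, phi_two_pow_mul_sub (Finset.mem_range_succ_iff.mp hj) hx hy, ← hweight]
  ring

theorem knoppN_affine_slope (α : ℝ) (hα : 0 < α) (hα1 : α < 1) (n k : ℕ)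
    (hk : k < 2 ^ (n+1)) :
    ∀ x ∈ Set.Icc ((k:ℝ)/2^(n+1)) (((k:ℝ)+1)/2^(n+1)),
    ∀ y ∈ Set.Icc ((k:ℝ)/2^(n+1)) (((k:ℝ)+1)/2^(n+1)),
      KnoppN α n x - KnoppN α n y = knoppSlope α ((k:ℝ)/2^(n+1)) (n+1) * (x - y) :=
  knoppN_affine_slope_general α n k
end

section
/- Let f : ℝ → ℝ with f ∈ C^α(x_0) for some 0 < α < 1 (i.e., |f(x) - f(x_0)| ≤ C|x - x_0|^α near x_0), and let Ω = {(x,y) : y ≤ f(x)} be the domain below the graph of f. Then X_0 = (x_0, f(x_0)) is strongly (1/α - 1)-accessible in both Ω and its complement: there exist c > 0 and r_0 > 0 such that for all r ≤ r_0, meas(Ω ∩ B(X_0, r)) ≥ c·r^{1/α + 1} and meas(Ω^c ∩ B(X_0, r)) ≥ c·r^{1/α + 1}. -/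
/-!
Near `x₀` the Hölder bound confines the graph of `f` to the horizontal strip `|y - f x₀| ≤ r / 2`
as long as `|x - x₀| < w` with `C w ^ α ≈ r`, i.e. `w ≈ r ^ (1 / α)`. Since `α ≤ 1` this window
is narrower than `r`, so the ball of radius `r` around `(x₀, f x₀)` contains a `2w × r / 2`
rectangle below the graph and another one above it, each of area `w r ≈ r ^ (1 / α + 1)`.
-/

open Real MeasureTheory Set Metric

lemma volume_ball_prod_Ioo (x₀ w a b : ℝ) :
    volume (ball x₀ w ×ˢ Ioo a b) = ENNReal.ofReal (2 * w) * ENNReal.ofReal (b - a) := by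
  rw [Measure.volume_eq_prod, Measure.prod_prod, Real.volume_ball, Real.volume_Ioo]

lemma ball_prod_Ioo_subset_ball {x₀ y₀ r w a b : ℝ} (hw : w ≤ r) (ha : y₀ - r ≤ a)
    (hb : b ≤ y₀ + r) : ball x₀ w ×ˢ Ioo a b ⊆ ball (x₀, y₀) r := by
  rw [← ball_prod_same, Real.ball_eq_Ioo y₀]
  exact prod_mono (ball_subset_ball hw) (Ioo_subset_Ioo ha hb)

section Graph

variable {f : ℝ → ℝ} {x₀ r w : ℝ}

lemma ofReal_mul_le_volume_subgraph_inter_ball (hw : 0 ≤ w) (hwr : w ≤ r)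
    (hf : MapsTo f (ball x₀ w) (closedBall (f x₀) (r / 2))) :
    ENNReal.ofReal (w * r) ≤ volume ({p : ℝ × ℝ | p.2 ≤ f p.1} ∩ ball (x₀, f x₀) r) := by
  calc ENNReal.ofReal (w * r) = volume (ball x₀ w ×ˢ Ioo (f x₀ - r) (f x₀ - r / 2)) := by
        rw [volume_ball_prod_Ioo, ← ENNReal.ofReal_mul (by positivity)]
        ring_nf
    _ ≤ _ := by
        refine measure_mono (subset_inter (fun p ⟨hx, hy⟩ => ?_)
          (ball_prod_Ioo_subset_ball hwr le_rfl (by linarith)))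
        have hfx := (Real.closedBall_eq_Icc ▸ hf hx).1
        show p.2 ≤ f p.1
        linarith [hy.2]

lemma ofReal_mul_le_volume_supergraph_inter_ball (hw : 0 ≤ w) (hwr : w ≤ r)
    (hf : MapsTo f (ball x₀ w) (closedBall (f x₀) (r / 2))) :
    ENNReal.ofReal (w * r) ≤ volume ({p : ℝ × ℝ | p.2 ≤ f p.1}ᶜ ∩ ball (x₀, f x₀) r) := by
  calc ENNReal.ofReal (w * r) = volume (ball x₀ w ×ˢ Ioo (f x₀ + r / 2) (f x₀ + r)) := by
        rw [volume_ball_prod_Ioo, ← ENNReal.ofReal_mul (by positivity)]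
        ring_nf
    _ ≤ _ := by
        refine measure_mono (subset_inter (fun p ⟨hx, hy⟩ => ?_)
          (ball_prod_Ioo_subset_ball hwr (by linarith) le_rfl))
        have hfx := (Real.closedBall_eq_Icc ▸ hf hx).2
        show ¬p.2 ≤ f p.1
        linarith [hy.1]

lemma mapsTo_ball_closedBall_of_holder {C α δ : ℝ} (hC : 0 ≤ C) (hα : 0 ≤ α) (hwδ : w ≤ δ)
    (hf : ∀ x : ℝ, |x - x₀| < δ → |f x - f x₀| ≤ C * |x - x₀| ^ α) :
    MapsTo f (ball x₀ w) (closedBall (f x₀) (C * w ^ α)) := by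
  intro x hx
  rw [mem_ball, Real.dist_eq] at hx
  rw [mem_closedBall, Real.dist_eq]
  calc |f x - f x₀| ≤ C * |x - x₀| ^ α := hf x (hx.trans_le hwδ)
    _ ≤ C * w ^ α := by gcongr

end Graph

lemma div_rpow_one_div_le_self {α K r : ℝ} (hα : 0 < α) (hα1 : α ≤ 1) (hK : 1 ≤ K)
    (hr : 0 ≤ r) (hr1 : r ≤ 1) : (r / K) ^ (1 / α) ≤ r := by
  have hrK : r / K ≤ r := div_le_self hr hK
  calc (r / K) ^ (1 / α) ≤ r / K :=
        rpow_le_self_of_le_one (by positivity) (hrK.trans hr1) (one_le_one_div hα hα1)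
    _ ≤ r := hrK

theorem strong_accessible_of_pointwise_holder (α : ℝ) (hα : 0 < α) (hα1 : α < 1)
    (f : ℝ → ℝ) (x₀ : ℝ)
    (hf : ∃ C > 0, ∃ δ > 0, ∀ x : ℝ, |x - x₀| < δ → |f x - f x₀| ≤ C * |x - x₀| ^ α) :
    ∃ c > 0, ∃ r₀ > 0, ∀ r : ℝ, 0 < r → r ≤ r₀ →
      ENNReal.ofReal (c * r ^ (1/α + 1)) ≤
        volume ({p : ℝ × ℝ | p.2 ≤ f p.1} ∩ Metric.ball (x₀, f x₀) r) ∧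
      ENNReal.ofReal (c * r ^ (1/α + 1)) ≤
        volume ({p : ℝ × ℝ | p.2 ≤ f p.1}ᶜ ∩ Metric.ball (x₀, f x₀) r) := by
  obtain ⟨C, hC, δ, hδ, hfC⟩ := hf
  set K := max (2 * C) 1
  have hK : 0 < K := lt_max_of_lt_right one_pos
  refine ⟨(1 / K) ^ (1 / α), by positivity, min δ 1, lt_min hδ one_pos, fun r hr hrr₀ => ?_⟩
  set w := (r / K) ^ (1 / α) with hw
  have hwr : w ≤ r :=
    div_rpow_one_div_le_self hα hα1.le (le_max_right _ _) hr.le (hrr₀.trans (min_le_right _ _))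
  have hwα : w ^ α = r / K := by
    rw [hw, one_div, rpow_inv_rpow (by positivity) hα.ne']
  have hCw : C * w ^ α ≤ r / 2 := by
    rw [hwα, mul_div, div_le_div_iff₀ hK two_pos]
    nlinarith [le_max_left (2 * C) 1]
  have hmaps : MapsTo f (ball x₀ w) (closedBall (f x₀) (r / 2)) :=
    (mapsTo_ball_closedBall_of_holder hC.le hα.le
      (hwr.trans (hrr₀.trans (min_le_left _ _))) hfC).mono_right (closedBall_subset_closedBall hCw)
  have hcw : (1 / K) ^ (1 / α) * r ^ (1 / α + 1) = w * r := by
    rw [rpow_add_one hr.ne', ← mul_assoc, ← mul_rpow (by positivity) hr.le, one_div_mul_eq_div]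
  rw [hcw]
  exact ⟨ofReal_mul_le_volume_subgraph_inter_ball (by positivity) hwr hmaps,
    ofReal_mul_le_volume_supergraph_inter_ball (by positivity) hwr hmaps⟩
end

section
/- Let f : ℝ → ℝ be uniformly Hölder of order α ∈ (0,1), Ω the domain below its graph, and X_0 = (x_0, f(x_0)). Suppose there exist c > 0, a sequence r_n → 0 of positive reals, points x_n ∈ (x_0 - r_n, x_0 + r_n), and n_0 such that f(x_n) = f(x_0) - c·r_n^α for all n ≥ n_0. Then the weak accessibility exponent of Ω^c at X_0 is 0, i.e., limsup as r → 0 of meas(Ω^c ∩ B(X_0, r))/r^{2+ε} = ∞ for every ε > 0. -/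
open Real MeasureTheory Filter Topology

/-!
The ball `B(X₀, ρ)` of `ℝ × ℝ` (sup metric) is a square of area `4ρ²`, and `Ωᶜ ∩ B(X₀, ρ)` is a
nonempty open set because the Hölder function `f` is continuous; so
`log |Ωᶜ ∩ B(X₀, ρ)| / log ρ ≥ 2 + log 4 / log ρ → 2`.
Conversely, the Hölder bound keeps `f` below `f(x₀) - θ rₙ` on the `θ rₙ`-neighbourhood of `xₙ`,
because `f` already drops by `c rₙ^α ≥ c rₙ` at `xₙ`. This box of area `2θ² rₙ²` lies in
`Ωᶜ ∩ B(X₀, 2rₙ)`, so along `ρ = 2rₙ` the ratio is at most `2 + log(θ²/2) / log ρ → 2`.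
-/

theorem Filter.liminf_eq_of_tendsto_of_eventually_le_of_frequently_le {β : Type*}
    {l : Filter β} {g u v : β → ℝ} {d : ℝ} (hu : Tendsto u l (𝓝 d)) (hv : Tendsto v l (𝓝 d))
    (hug : ∀ᶠ b in l, u b ≤ g b) (hgv : ∃ᶠ b in l, g b ≤ v b) : liminf g l = d := by
  have hl : l.NeBot := ⟨fun hbot => by simp [hbot] at hgv⟩
  have hgv' : ∀ ε > 0, ∃ᶠ b in l, g b ≤ d + ε := fun ε hε =>
    hgv.mp <| (hv.eventually (eventually_le_nhds (lt_add_of_pos_right d hε))).mono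
      fun _ hvb hgb => hgb.trans hvb
  refine le_antisymm (le_of_forall_pos_lt_add fun ε hε => ?_) ?_
  · calc liminf g l ≤ d + ε / 2 :=
          liminf_le_of_frequently_le (hgv' _ (half_pos hε)) (hu.isBoundedUnder_ge.mono_ge hug)
      _ < d + ε := by linarith
  · calc d = liminf u l := hu.liminf_eq.symm
      _ ≤ liminf g l := liminf_le_liminf hug hu.isBoundedUnder_ge
          (IsCoboundedUnder.of_frequently_le (hgv' 1 one_pos))

theorem Real.log_mul_rpow_div_log {K ρ : ℝ} (hK : 0 < K) (hρ : 0 < ρ) (hρ1 : ρ ≠ 1) (d : ℝ) :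
    log (K * ρ ^ d) / log ρ = d + log K / log ρ := by
  have hlog : log ρ ≠ 0 := log_ne_zero_of_pos_of_ne_one hρ hρ1
  rw [log_mul hK.ne' (rpow_pos_of_pos hρ d).ne', log_rpow hρ]
  field_simp
  ring

theorem Real.tendsto_add_div_log_nhdsGT_zero (d a : ℝ) :
    Tendsto (fun ρ => d + a / log ρ) (𝓝[>] 0) (𝓝 d) := by
  simpa using tendsto_const_nhds.add (tendsto_const_nhds.div_atBot tendsto_log_nhdsGT_zero)

theorem liminf_log_div_log_eq_of_rpow_bounds {m : ℝ → ℝ} {d K κ : ℝ} (hK : 0 < K) (hκ : 0 < κ)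
    (hpos : ∀ᶠ ρ in 𝓝[>] 0, 0 < m ρ) (hle : ∀ᶠ ρ in 𝓝[>] 0, m ρ ≤ K * ρ ^ d)
    (hge : ∃ᶠ ρ in 𝓝[>] 0, κ * ρ ^ d ≤ m ρ) :
    liminf (fun ρ => log (m ρ) / log ρ) (𝓝[>] 0) = d := by
  have hsmall : ∀ᶠ ρ in 𝓝[>] (0 : ℝ), ρ ∈ Set.Ioo 0 1 := Ioo_mem_nhdsGT one_pos
  refine liminf_eq_of_tendsto_of_eventually_le_of_frequently_le
    (tendsto_add_div_log_nhdsGT_zero d (log K)) (tendsto_add_div_log_nhdsGT_zero d (log κ)) ?_ ?_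
  · filter_upwards [hsmall, hpos, hle] with ρ ⟨hρ0, hρ1⟩ hm hmK
    rw [← log_mul_rpow_div_log hK hρ0 hρ1.ne d]
    exact div_le_div_of_nonpos_of_le (log_neg hρ0 hρ1).le (log_le_log hm hmK)
  · refine (hge.and_eventually hsmall).mono fun ρ ⟨hκm, hρ0, hρ1⟩ => ?_
    rw [← log_mul_rpow_div_log hκ hρ0 hρ1.ne d]
    exact div_le_div_of_nonpos_of_le (log_neg hρ0 hρ1).le (log_le_log (by positivity) hκm)

section Holder

variable {f : ℝ → ℝ} {C α : ℝ}

theorem nonneg_of_abs_sub_le_mul_rpow (hf : ∀ x y, |f x - f y| ≤ C * |x - y| ^ α) : 0 ≤ C := by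
  simpa using (abs_nonneg _).trans (hf 1 0)

theorem continuous_of_abs_sub_le_mul_rpow (hα : 0 < α)
    (hf : ∀ x y, |f x - f y| ≤ C * |x - y| ^ α) : Continuous f := by
  refine continuous_iff_continuousAt.2 fun x => ?_
  have hbound : Tendsto (fun y => C * |y - x| ^ α) (𝓝 x) (𝓝 0) := by
    simpa [zero_rpow hα.ne'] using
      (((continuous_id.sub (continuous_const (y := x))).abs.rpow_const fun _ => Or.inr hα.le).const_mul
        C).tendsto x
  rw [ContinuousAt, tendsto_iff_dist_tendsto_zero]
  exact squeeze_zero (fun _ => dist_nonneg) (fun y => hf y x) hbound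

theorem le_add_mul_rpow_of_abs_sub_le (hα : 0 ≤ α) (hf : ∀ x y, |f x - f y| ≤ C * |x - y| ^ α)
    {s t θ r : ℝ} (hθ : 0 ≤ θ) (hr : 0 ≤ r) (hts : |t - s| ≤ θ * r) :
    f t ≤ f s + C * θ ^ α * r ^ α := by
  have hC := nonneg_of_abs_sub_le_mul_rpow hf
  calc f t ≤ f s + |f t - f s| := by linarith [le_abs_self (f t - f s)]
    _ ≤ f s + C * |t - s| ^ α := by gcongr; exact hf t s
    _ ≤ f s + C * (θ * r) ^ α := by gcongr
    _ = f s + C * θ ^ α * r ^ α := by rw [mul_rpow hθ hr, mul_assoc]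

end Holder

section Volume

theorem toReal_volume_Ioo_prod_Ioo {a b c d : ℝ} (hab : a ≤ b) (hcd : c ≤ d) :
    (volume (Set.Ioo a b ×ˢ Set.Ioo c d)).toReal = (b - a) * (d - c) := by
  rw [Measure.volume_eq_prod, Measure.prod_prod, Real.volume_Ioo, Real.volume_Ioo,
    ENNReal.toReal_mul, ENNReal.toReal_ofReal (sub_nonneg.2 hab),
    ENNReal.toReal_ofReal (sub_nonneg.2 hcd)]

theorem volume_inter_ball_ne_top (s : Set (ℝ × ℝ)) (p : ℝ × ℝ) (ρ : ℝ) :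
    volume (s ∩ Metric.ball p ρ) ≠ ⊤ :=
  ((measure_mono Set.inter_subset_right).trans_lt measure_ball_lt_top).ne

theorem toReal_volume_inter_ball_le (s : Set (ℝ × ℝ)) (p : ℝ × ℝ) {ρ : ℝ} (hρ : 0 ≤ ρ) :
    (volume (s ∩ Metric.ball p ρ)).toReal ≤ 4 * ρ ^ 2 := by
  obtain ⟨a, b⟩ := p
  calc (volume (s ∩ Metric.ball (a, b) ρ)).toReal ≤ (volume (Metric.ball (a, b) ρ)).toReal :=
        ENNReal.toReal_mono measure_ball_lt_top.ne (measure_mono Set.inter_subset_right)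
    _ = 4 * ρ ^ 2 := by
        rw [← ball_prod_same, Measure.volume_eq_prod, Measure.prod_prod, Real.volume_ball,
          Real.volume_ball, ENNReal.toReal_mul, ENNReal.toReal_ofReal (by positivity)]
        ring

end Volume

section Supergraph

variable {f : ℝ → ℝ}

theorem toReal_volume_compl_subgraph_inter_ball_pos (hf : Continuous f) (x₀ : ℝ) {ρ : ℝ}
    (hρ : 0 < ρ) :
    0 < (volume ({p : ℝ × ℝ | p.2 ≤ f p.1}ᶜ ∩ Metric.ball (x₀, f x₀) ρ)).toReal := by
  have hopen : IsOpen ({p : ℝ × ℝ | p.2 ≤ f p.1}ᶜ ∩ Metric.ball (x₀, f x₀) ρ) :=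
    (isClosed_le continuous_snd (hf.comp continuous_fst)).isOpen_compl.inter Metric.isOpen_ball
  have hmem : (x₀, f x₀ + ρ / 2) ∈ {p : ℝ × ℝ | p.2 ≤ f p.1}ᶜ ∩ Metric.ball (x₀, f x₀) ρ := by
    refine ⟨by simp [hρ], ?_⟩
    rw [Metric.mem_ball, Prod.dist_eq, Real.dist_eq, Real.dist_eq]
    simp [abs_of_pos (half_pos hρ), hρ]
  exact ENNReal.toReal_pos (hopen.measure_pos volume ⟨_, hmem⟩).ne'
    (volume_inter_ball_ne_top _ _ _)

theorem sq_le_toReal_volume_compl_subgraph_inter_ball {C α : ℝ} (hα0 : 0 ≤ α) (hα1 : α ≤ 1)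
    (hf : ∀ x y, |f x - f y| ≤ C * |x - y| ^ α) {x₀ x' c θ r : ℝ} (hθ0 : 0 < θ) (hθ1 : θ ≤ 1)
    (hθc : θ ≤ c / 2) (hθC : C * θ ^ α ≤ c / 2) (hr0 : 0 < r) (hr1 : r ≤ 1)
    (hx' : |x' - x₀| < r) (hfx' : f x' = f x₀ - c * r ^ α) :
    θ ^ 2 / 2 * (2 * r) ^ 2 ≤
      (volume ({p : ℝ × ℝ | p.2 ≤ f p.1}ᶜ ∩ Metric.ball (x₀, f x₀) (2 * r))).toReal := by
  have hrα : r ≤ r ^ α := by simpa using rpow_le_rpow_of_exponent_ge hr0 hr1 hα1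
  have hc : 0 ≤ c / 2 := hθ0.le.trans hθc
  have hθr : θ * r ≤ r := mul_le_of_le_one_left hr0.le hθ1
  have hdrop : ∀ t ∈ Set.Ioo (x' - θ * r) (x' + θ * r), f t ≤ f x₀ - θ * r := by
    intro t ht
    have hts : |t - x'| ≤ θ * r := abs_le.2 ⟨by linarith [ht.1], by linarith [ht.2]⟩
    calc f t ≤ f x' + C * θ ^ α * r ^ α := le_add_mul_rpow_of_abs_sub_le hα0 hf hθ0.le hr0.le hts
      _ ≤ f x' + c / 2 * r ^ α := by gcongr
      _ = f x₀ - c / 2 * r ^ α := by rw [hfx']; ring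
      _ ≤ f x₀ - θ * r := by gcongr
  have hbox : Set.Ioo (x' - θ * r) (x' + θ * r) ×ˢ Set.Ioo (f x₀ - θ * r) (f x₀) ⊆
      {p : ℝ × ℝ | p.2 ≤ f p.1}ᶜ ∩ Metric.ball (x₀, f x₀) (2 * r) := by
    rintro ⟨t, y⟩ ⟨ht, hy⟩
    have hft := hdrop t ht
    rw [Set.mem_Ioo] at ht hy
    rw [abs_lt] at hx'
    refine ⟨?_, ?_⟩
    · simp only [Set.mem_compl_iff, Set.mem_ofPred_eq, not_le]
      linarith
    · rw [Metric.mem_ball, Prod.dist_eq, Real.dist_eq, Real.dist_eq, max_lt_iff, abs_lt, abs_lt]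
      refine ⟨⟨?_, ?_⟩, ?_, ?_⟩ <;> linarith
  calc θ ^ 2 / 2 * (2 * r) ^ 2
      = (volume (Set.Ioo (x' - θ * r) (x' + θ * r) ×ˢ Set.Ioo (f x₀ - θ * r) (f x₀))).toReal := by
        rw [toReal_volume_Ioo_prod_Ioo (by nlinarith) (by nlinarith)]
        ring
    _ ≤ _ := ENNReal.toReal_mono (volume_inter_ball_ne_top _ _ _) (measure_mono hbox)

end Supergraph

theorem weak_accessibility_zero_of_seq (α : ℝ) (hα : 0 < α) (hα1 : α < 1)
    (f : ℝ → ℝ) (C : ℝ) (hf : ∀ x y : ℝ, |f x - f y| ≤ C * |x - y| ^ α)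
    (x₀ c : ℝ) (hc : 0 < c) (r : ℕ → ℝ) (hrpos : ∀ n, 0 < r n)
    (hrlim : Tendsto r atTop (𝓝 0))
    (x : ℕ → ℝ) (hx : ∀ n, x n ∈ Set.Ioo (x₀ - r n) (x₀ + r n))
    (n₀ : ℕ) (hfx : ∀ n, n₀ ≤ n → f (x n) = f x₀ - c * r n ^ α) :
    liminf (fun ρ : ℝ =>
        Real.log ((volume ({p : ℝ × ℝ | p.2 ≤ f p.1}ᶜ ∩ Metric.ball (x₀, f x₀) ρ)).toReal)
          / Real.log ρ) (𝓝[>] (0:ℝ)) = 2 := by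
  obtain ⟨θ, hθ0, hθ1, hθc, hθC⟩ : ∃ θ : ℝ, 0 < θ ∧ θ ≤ 1 ∧ θ ≤ c / 2 ∧ C * θ ^ α ≤ c / 2 := by
    have hCθ : Tendsto (fun θ : ℝ => C * θ ^ α) (𝓝[>] 0) (𝓝 0) := by
      simpa [zero_rpow hα.ne'] using
        (((continuous_id.rpow_const fun _ => Or.inr hα.le).const_mul C).tendsto 0).mono_left
          nhdsWithin_le_nhds
    have hsmall : ∀ᶠ θ in 𝓝[>] (0 : ℝ), θ ∈ Set.Ioo 0 (min 1 (c / 2)) :=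
      Ioo_mem_nhdsGT (lt_min one_pos (half_pos hc))
    obtain ⟨θ, ⟨hθ0, hθ⟩, hθC⟩ :=
      (hsmall.and (hCθ.eventually (eventually_le_nhds (half_pos hc)))).exists
    exact ⟨θ, hθ0, hθ.le.trans (min_le_left _ _), hθ.le.trans (min_le_right _ _), hθC⟩
  have h2r : Tendsto (fun n => 2 * r n) atTop (𝓝[>] 0) :=
    tendsto_nhdsWithin_iff.2 ⟨by simpa using hrlim.const_mul 2,
      Eventually.of_forall fun n => mul_pos two_pos (hrpos n)⟩
  refine liminf_log_div_log_eq_of_rpow_bounds (K := 4) (κ := θ ^ 2 / 2) four_pos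
    (by positivity) ?_ ?_ ?_
  · filter_upwards [eventually_mem_nhdsWithin] with ρ hρ using
      toReal_volume_compl_subgraph_inter_ball_pos (continuous_of_abs_sub_le_mul_rpow hα hf) x₀ hρ
  · filter_upwards [eventually_mem_nhdsWithin] with ρ hρ
    simpa [rpow_two] using toReal_volume_inter_ball_le _ (x₀, f x₀) (le_of_lt hρ)
  · refine h2r.frequently (Eventually.frequently ?_)
    filter_upwards [eventually_ge_atTop n₀, hrlim.eventually (eventually_le_nhds one_pos)]
      with n hn hr1
    rw [rpow_two]
    exact sq_le_toReal_volume_compl_subgraph_inter_ball hα.le hα1.le hf hθ0 hθ1 hθc hθC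
      (hrpos n) hr1 (abs_sub_lt_iff.2 ⟨by linarith [(hx n).2], by linarith [(hx n).1]⟩)
      (hfx n hn)
end
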